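/- Let (P,Q) be a quasi-projection pair of bounded linear operators on a complex Hilbert space H, and set H₁ = ran(P) ∩ ran(Q) and H₄ = ker(P) ∩ ker(Q). Then ‖PQ − P_{H₁}‖ = ‖(I−P)(I−Q) − P_{H₄}‖, where the norms are operator norms. -/

import Mathlib

set_option linter.unusedSectionVars false
set_option linter.unusedVariables false
set_option linter.unnecessarySimpa false
set_option maxHeartbeats 3000000
set_option synthInstance.maxHeartbeats 400000

noncomputable section

open ContinuousLinearMap

variable {H : Type*} [NormedAddCommGroup H] [InnerProductSpace ℂ H] [CompleteSpace H]

local notation "⟪" x ", " y "⟫" => @inner ℂ _ _ x y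

/-- The orthogonal projection onto a closed subspace `K` of `H`, regarded as a bounded
operator on `H`. -/
def projOn (K : Submodule ℂ H) (hK : IsClosed (K : Set H)) : H →L[ℂ] H :=
  haveI : CompleteSpace K := hK.completeSpace_coe
  K.subtypeL ∘L K.orthogonalProjectionOnto

theorem range_eq_ker_of_idem (T : H →L[ℂ] H) (h : T * T = T) :
    LinearMap.range (T : H →ₗ[ℂ] H) = LinearMap.ker ((1 - T : H →L[ℂ] H) : H →ₗ[ℂ] H) := by
  ext x
  constructor
  · rintro ⟨y, rfl⟩
    have hy : T (T y) = T y := congrFun (congrArg DFunLike.coe h) y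
    simp [LinearMap.mem_ker, hy]
  · intro hx
    have hx' : x - T x = 0 := by
      have := LinearMap.mem_ker.mp hx
      simpa using this
    exact ⟨x, (sub_eq_zero.mp hx').symm⟩

theorem isClosed_range_of_idem (T : H →L[ℂ] H) (h : T * T = T) :
    IsClosed ((LinearMap.range (T : H →ₗ[ℂ] H) : Submodule ℂ H) : Set H) := by
  rw [range_eq_ker_of_idem T h]
  exact ContinuousLinearMap.isClosed_ker _

theorem isClosed_inf {K L : Submodule ℂ H} (hK : IsClosed (K : Set H))
    (hL : IsClosed (L : Set H)) : IsClosed ((K ⊓ L : Submodule ℂ H) : Set H) := by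
  rw [Submodule.coe_inf]
  exact hK.inter hL

/-- The orthogonal projection onto the closure of the range of an operator. -/
def projCl (T : H →L[ℂ] H) : H →L[ℂ] H :=
  projOn (LinearMap.range (T : H →ₗ[ℂ] H)).topologicalClosure
    (Submodule.isClosed_topologicalClosure _)

lemma projOn_congr {K K' : Submodule ℂ H} (hK : IsClosed (K : Set H))
    (hK' : IsClosed ((K' : Submodule ℂ H) : Set H)) (h : K = K') :
    projOn K hK = projOn K' hK' := by
  subst h; rfl

lemma projOn_apply_of_mem (K : Submodule ℂ H) (hK : IsClosed (K : Set H)) {x : H}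
    (hx : x ∈ K) : projOn K hK x = x := by
  haveI : CompleteSpace K := hK.completeSpace_coe
  show (K.subtypeL ∘L K.orthogonalProjectionOnto) x = x
  exact K.starProjection_eq_self_iff.mpr hx

lemma projOn_apply_mem (K : Submodule ℂ H) (hK : IsClosed (K : Set H)) (x : H) :
    projOn K hK x ∈ K := by
  haveI : CompleteSpace K := hK.completeSpace_coe
  show (K.subtypeL ∘L K.orthogonalProjectionOnto) x ∈ K
  simpa using SetLike.coe_mem _

lemma projOn_star (K : Submodule ℂ H) (hK : IsClosed (K : Set H)) :
    star (projOn K hK) = projOn K hK := by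
  haveI : CompleteSpace K := hK.completeSpace_coe
  exact isSelfAdjoint_starProjection K

lemma projOn_idem (K : Submodule ℂ H) (hK : IsClosed (K : Set H)) :
    projOn K hK * projOn K hK = projOn K hK := by
  ext x
  exact projOn_apply_of_mem K hK (projOn_apply_mem K hK x)

lemma mem_range_fix {T : H →L[ℂ] H} (hT : T * T = T) {x : H}
    (hx : x ∈ LinearMap.range (T : H →ₗ[ℂ] H)) : T x = x := by
  obtain ⟨y, rfl⟩ := hx
  exact congrFun (congrArg DFunLike.coe hT) y

lemma exists_chi (l : ℝ) (hl : 0 < l) (S : Set ℝ)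
    (hS : ∀ t ∈ S, 0 ≤ t^2 - t ∧ (t^2 - t) * ((2*t^2 - t) - l) ≤ 0) :
    ∃ χ : ℝ → ℝ, Continuous χ ∧ (∀ t ∈ S, χ t * χ t = χ t) ∧
      (∀ t ∈ S, (t - 1) * χ t = 0) ∧
      (∀ t ∈ S, 0 ≤ (2*t^2 - t) * (1 - χ t) ∧ (2*t^2 - t) * (1 - χ t) ≤ l) := by
  have hf0 : ∀ t ∈ S, 0 ≤ 2*t^2 - t := by
    intro t ht
    nlinarith [(hS t ht).1]
  have hfle : ∀ t ∈ S, t ≠ 1 → 2*t^2 - t ≤ l := by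
    intro t ht ht1
    obtain ⟨h1, h2⟩ := hS t ht
    rcases lt_or_eq_of_le h1 with h1' | h1'
    · nlinarith
    · -- t^2 - t = 0, t ≠ 1, so t = 0
      have : t = 0 := by
        rcases mul_eq_zero.mp (by linarith [h1'] : t * (t - 1) = 0) with h | h
        · exact h
        · exact absurd (by linarith) ht1
      rw [this]; simpa using hl.le
  rcases le_or_gt 1 l with hl1 | hl1
  · refine ⟨fun _ => 0, continuous_const, by simp, by simp, ?_⟩
    intro t ht
    constructor
    · simpa using hf0 t ht
    · rcases eq_or_ne t 1 with rfl | ht1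
      · norm_num; linarith
      · simpa using hfle t ht ht1
  · -- l < 1 : on S, t ≤ 0 or t = 1
    have hdich : ∀ t ∈ S, t = 1 ∨ t ≤ 0 := by
      intro t ht
      obtain ⟨h1, h2⟩ := hS t ht
      rcases eq_or_ne t 1 with rfl | ht1
      · exact Or.inl rfl
      · right
        by_contra hneg
        push_neg at hneg
        have ht1' : 1 < t := by
          rcases lt_or_eq_of_le (le_of_not_gt (fun h : t < 1 => by nlinarith)) with h | h
          · exact h
          · exact absurd h.symm ht1
        have hq1 : 0 < t^2 - t := by nlinarith
        have hq2 : 0 < 2*t^2 - t - l := by nlinarith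
        nlinarith
    set g : ℝ → ℝ := fun t => max 0 (min 1 (2 - 4*|t - 1|)) with hg
    have hg1 : g 1 = 1 := by simp [hg]
    have hg0 : ∀ t : ℝ, t ≤ 0 → g t = 0 := by
      intro t ht0
      have h2 : (2 : ℝ) - 4*|t-1| ≤ 0 := by
        rw [abs_of_nonpos (by linarith)]; linarith
      exact max_eq_left ((min_le_right 1 _).trans h2)
    refine ⟨g, by fun_prop, ?_, ?_, ?_⟩
    · intro t ht
      rcases hdich t ht with rfl | ht0
      · rw [hg1]; ring
      · rw [hg0 t ht0]; ring
    · intro t ht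
      rcases hdich t ht with rfl | ht0
      · ring
      · rw [hg0 t ht0]; ring
    · intro t ht
      rcases hdich t ht with rfl | ht0
      · rw [hg1]; norm_num; linarith
      · rw [hg0 t ht0]
        have ht1 : t ≠ 1 := by intro h; rw [h] at ht0; linarith
        constructor
        · simpa using hf0 t ht
        · simpa using hfle t ht ht1

theorem key_ineq (P Q : H →L[ℂ] H)
    (hPsa : ContinuousLinearMap.adjoint P = P) (hP : P * P = P) (hQ : Q * Q = Q)
    (hPQ : ContinuousLinearMap.adjoint Q = (2 * P - 1) * Q * (2 * P - 1))
    (hc₁ : IsClosed ((LinearMap.range (P : H →ₗ[ℂ] H) ⊓ LinearMap.range (Q : H →ₗ[ℂ] H) : Submodule ℂ H) : Set H))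
    (hc₄ : IsClosed ((LinearMap.ker (P : H →ₗ[ℂ] H) ⊓ LinearMap.ker (Q : H →ₗ[ℂ] H) : Submodule ℂ H) : Set H)) :
    ‖P * Q - projOn (LinearMap.range (P : H →ₗ[ℂ] H) ⊓ LinearMap.range (Q : H →ₗ[ℂ] H)) hc₁‖
      ≤ ‖(1 - P) * (1 - Q) - projOn (LinearMap.ker (P : H →ₗ[ℂ] H) ⊓ LinearMap.ker (Q : H →ₗ[ℂ] H)) hc₄‖ := by
  have hPs : star P = P := by rw [star_eq_adjoint]; exact hPsa
  have hQs : star Q = (2*P-1) * Q * (2*P-1) := by rw [star_eq_adjoint]; exact hPQ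
  set U : H →L[ℂ] H := 2*P - 1 with hUdef
  clear_value U
  have hUs : star U = U := by
    rw [hUdef]; simp [star_sub, star_mul, hPs, two_mul, mul_two]
  have hU2 : U * U = 1 := by
    have h1 : U * U = 4*(P*P) - 4*P + 1 := by rw [hUdef]; noncomm_ring
    rw [h1, hP]; noncomm_ring
  have hPU : P * U = P := by
    have h1 : P * U = 2*(P*P) - P := by rw [hUdef]; noncomm_ring
    rw [h1, hP]; noncomm_ring
  have hUP : U * P = P := by
    have h1 : U * P = 2*(P*P) - P := by rw [hUdef]; noncomm_ring
    rw [h1, hP]; noncomm_ring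
  have hUapp : ∀ y : H, P y = y → U y = y := by
    intro y hy
    rw [hUdef]
    simp [two_mul, sub_apply, add_apply, ContinuousLinearMap.one_apply, ContinuousLinearMap.mul_apply, hy]
  set R : H →L[ℂ] H := U * Q with hRdef
  clear_value R
  have hRs : star R = R := by
    have h1 : star R = star Q * star U := by rw [hRdef, star_mul]
    rw [h1, hQs, hUs, mul_assoc, hU2, mul_one]
  have hUR : U * R = Q := by rw [hRdef, ← mul_assoc, hU2, one_mul]
  have hPR : P * R = P * Q := by rw [hRdef, ← mul_assoc, hPU]
  have hRR : R * R = R*(P*R) + R*(P*R) - R := by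
    have hRUR : R * U * R = R := by
      rw [hRdef]
      calc U*Q*U*(U*Q) = U*(Q*((U*U)*Q)) := by simp only [mul_assoc]
        _ = U*(Q*Q) := by rw [hU2, one_mul]
        _ = U*Q := by rw [hQ]
    have hexp : R * U * R = R*(P*R) + R*(P*R) - R*R := by rw [hUdef]; noncomm_ring
    have h2 : R*(P*R) + R*(P*R) - R*R = R := by rw [← hexp, hRUR]
    have h3 := sub_eq_iff_eq_add.mp h2
    exact eq_sub_of_add_eq (by rw [add_comm]; exact h3.symm)
  -- the projections
  set E₁ : H →L[ℂ] H := projOn (LinearMap.range (P : H →ₗ[ℂ] H) ⊓ LinearMap.range (Q : H →ₗ[ℂ] H)) hc₁ with hE₁def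
  set E₄ : H →L[ℂ] H := projOn (LinearMap.ker (P : H →ₗ[ℂ] H) ⊓ LinearMap.ker (Q : H →ₗ[ℂ] H)) hc₄ with hE₄def
  have hE₁s : star E₁ = E₁ := by rw [hE₁def]; exact projOn_star _ _
  have hE₄s : star E₄ = E₄ := by rw [hE₄def]; exact projOn_star _ _
  have wE₁E₁ : E₁ * E₁ = E₁ := by rw [hE₁def]; exact projOn_idem _ _
  have wE₄E₄ : E₄ * E₄ = E₄ := by rw [hE₄def]; exact projOn_idem _ _
  have wPE₁ : P * E₁ = E₁ := by
    rw [hE₁def]; ext x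
    simp only [ContinuousLinearMap.mul_apply]
    exact mem_range_fix hP (Submodule.mem_inf.mp (projOn_apply_mem _ _ x)).1
  have wQE₁ : Q * E₁ = E₁ := by
    rw [hE₁def]; ext x
    simp only [ContinuousLinearMap.mul_apply]
    exact mem_range_fix hQ (Submodule.mem_inf.mp (projOn_apply_mem _ _ x)).2
  have wRE₁ : R * E₁ = E₁ := by
    rw [hRdef, mul_assoc, wQE₁, hUdef, sub_mul, mul_assoc, wPE₁, one_mul, two_mul]
    abel
  have wE₁P : E₁ * P = E₁ := by rw [← hE₁s, ← hPs, ← star_mul, wPE₁]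
  have wE₁R : E₁ * R = E₁ := by rw [← hE₁s, ← hRs, ← star_mul, wRE₁]
  have wPE₄ : P * E₄ = 0 := by
    rw [hE₄def]; ext x
    simp only [ContinuousLinearMap.mul_apply, zero_apply]
    exact LinearMap.mem_ker.mp (Submodule.mem_inf.mp (projOn_apply_mem _ _ x)).1
  have wQE₄ : Q * E₄ = 0 := by
    rw [hE₄def]; ext x
    simp only [ContinuousLinearMap.mul_apply, zero_apply]
    exact LinearMap.mem_ker.mp (Submodule.mem_inf.mp (projOn_apply_mem _ _ x)).2
  have wRE₄ : R * E₄ = 0 := by rw [hRdef, mul_assoc, wQE₄, mul_zero]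
  have wE₄P : E₄ * P = 0 := by rw [← hE₄s, ← hPs, ← star_mul, wPE₄, star_zero]
  have wE₄R : E₄ * R = 0 := by rw [← hE₄s, ← hRs, ← star_mul, wRE₄, star_zero]
  clear_value E₁ E₄
  -- word reduction arsenal
  have wPP : ∀ X : H →L[ℂ] H, P*(P*X) = P*X := fun X => by rw [← mul_assoc, hP]
  have wRR : ∀ X : H →L[ℂ] H, R*(R*X) = R*(P*(R*X)) + R*(P*(R*X)) - R*X := fun X => by
    rw [← mul_assoc, hRR]; simp only [sub_mul, add_mul, mul_assoc]
  have wPE₁' : ∀ X : H →L[ℂ] H, P*(E₁*X) = E₁*X := fun X => by rw [← mul_assoc, wPE₁]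
  have wRE₁' : ∀ X : H →L[ℂ] H, R*(E₁*X) = E₁*X := fun X => by rw [← mul_assoc, wRE₁]
  have wE₁P' : ∀ X : H →L[ℂ] H, E₁*(P*X) = E₁*X := fun X => by rw [← mul_assoc, wE₁P]
  have wE₁R' : ∀ X : H →L[ℂ] H, E₁*(R*X) = E₁*X := fun X => by rw [← mul_assoc, wE₁R]
  have wE₁E₁' : ∀ X : H →L[ℂ] H, E₁*(E₁*X) = E₁*X := fun X => by rw [← mul_assoc, wE₁E₁]
  have wPE₄' : ∀ X : H →L[ℂ] H, P*(E₄*X) = 0 := fun X => by rw [← mul_assoc, wPE₄, zero_mul]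
  have wRE₄' : ∀ X : H →L[ℂ] H, R*(E₄*X) = 0 := fun X => by rw [← mul_assoc, wRE₄, zero_mul]
  have wE₄P' : ∀ X : H →L[ℂ] H, E₄*(P*X) = 0 := fun X => by rw [← mul_assoc, wE₄P, zero_mul]
  have wE₄R' : ∀ X : H →L[ℂ] H, E₄*(R*X) = 0 := fun X => by rw [← mul_assoc, wE₄R, zero_mul]
  have wE₄E₄' : ∀ X : H →L[ℂ] H, E₄*(E₄*X) = E₄*X := fun X => by rw [← mul_assoc, wE₄E₄]
  -- main operators
  set a : H →L[ℂ] H := P * R * P with hadef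
  clear_value a
  have hasa : IsSelfAdjoint a := by
    rw [IsSelfAdjoint, hadef, star_mul, star_mul, hPs, hRs, mul_assoc]
  set b : H →L[ℂ] H := P * R * (1 - P) with hbdef
  set bst : H →L[ℂ] H := (1 - P) * R * P with hbstdef
  clear_value b bst
  have hbs : star b = bst := by
    rw [hbdef, hbstdef, star_mul, star_mul, hPs, hRs, star_sub, star_one, hPs, mul_assoc]
  set m : H →L[ℂ] H := a^2 - a with hmdef
  clear_value m
  have hmb : m = b * bst := by
    rw [hmdef, hadef, hbdef, hbstdef, pow_two]
    simp only [mul_assoc, mul_sub, sub_mul, mul_add, add_mul, mul_one, one_mul,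
      wPP, wRR, hP]
    noncomm_ring
  have hm0 : 0 ≤ m := by
    rw [hmb, ← hbs]
    exact mul_star_self_nonneg b
  -- A and B
  set A : H →L[ℂ] H := P * Q - E₁ with hAdef
  set B : H →L[ℂ] H := (1 - P) * (1 - Q) - E₄ with hBdef
  clear_value A B
  -- identities about A and B
  have hAR : A = P * R - E₁ := by rw [hAdef, hPR]
  have hAs : star A = R * P - E₁ := by
    rw [hAR, star_sub, star_mul, hPs, hRs, hE₁s]
  have hBR : B = 1 - P + (1 - P) * R - E₄ := by
    have h1PU : (1 - P) * U = -(1 - P) := by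
      rw [hUdef]
      have h2 : (1 - P) * (2*P - 1) = 2*P - 2*(P*P) - 1 + P := by noncomm_ring
      rw [h2, hP]; noncomm_ring
    have h1PQ : (1 - P) * Q = -((1 - P) * R) := by
      rw [hRdef, ← mul_assoc, h1PU]
      simp only [neg_mul, mul_assoc, neg_neg]
    rw [hBdef, mul_sub, mul_one, h1PQ]
    noncomm_ring
  have hBs : star B = 1 - P + R * (1 - P) - E₄ := by
    rw [hBR]
    simp only [star_sub, star_add, star_mul, star_one, hPs, hRs, hE₄s]
  have hD : A * star A = a^2 + a^2 - a - E₁ := by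
    rw [hAs, hAR, hadef, pow_two]
    simp only [mul_assoc, mul_sub, sub_mul, mul_add, add_mul, mul_one, one_mul,
      wPP, wRR, wPE₁', wRE₁', wE₁P', wE₁R', wE₁E₁', wPE₁, wRE₁, wE₁P, wE₁R, wE₁E₁, hP]
    noncomm_ring
  have hF1 : b * (B * star B) * bst = (a^2 + a^2 - a) * (a^2 - a) := by
    rw [hBs, hBR, hbdef, hbstdef, hadef, pow_two]
    simp only [mul_assoc, mul_sub, sub_mul, mul_add, add_mul, mul_one, one_mul,
      mul_zero, zero_mul, sub_zero, zero_sub, add_zero, zero_add, mul_neg, neg_mul,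
      wPP, wRR, wPE₄', wRE₄', wE₄P', wE₄R', wE₄E₄', wPE₄, wRE₄, wE₄P, wE₄R, wE₄E₄, hP]
    noncomm_ring
  -- absorption of E₁ by a
  have haE₁ : a * E₁ = E₁ := by
    rw [hadef]
    simp only [mul_assoc, wPE₁, wRE₁, wPE₁', wRE₁']
  have hE₁a : E₁ * a = E₁ := by
    rw [hadef, ← mul_assoc, ← mul_assoc, wE₁P, wE₁R, wE₁P]
  -- cfc facts
  have hmcfc : cfc (fun t : ℝ => t^2 - t) a = m := by
    rw [cfc_sub (fun t : ℝ => t^2) (fun t : ℝ => t) a (by fun_prop) (by fun_prop),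
      cfc_pow_id a 2, cfc_id' ℝ a, hmdef]
  have hfa : cfc (fun t : ℝ => 2*t^2 - t) a = a^2 + a^2 - a := by
    have h1 : (fun t : ℝ => 2*t^2 - t) = (fun t : ℝ => (t^2 + t^2) - t) := by
      funext t; ring
    rw [h1, cfc_sub (fun t : ℝ => t^2 + t^2) (fun t : ℝ => t) a (by fun_prop) (by fun_prop),
      cfc_add a (fun t : ℝ => t^2) (fun t : ℝ => t^2) (by fun_prop) (by fun_prop),
      cfc_pow_id a 2, cfc_id' ℝ a]
  -- inner product interpretation of m
  have hadj : ∀ T : H →L[ℂ] H, ContinuousLinearMap.adjoint T = star T := fun T => rfl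
  have hinner_m : ∀ z : H, ⟪m z, z⟫ = (‖bst z‖:ℂ)^2 := by
    intro z
    rw [hmb, ContinuousLinearMap.mul_apply, ← hbs]
    calc ⟪b (star b z), z⟫ = ⟪star b z, star b z⟫ := (adjoint_inner_right b _ z).symm
      _ = (‖star b z‖:ℂ)^2 := inner_self_eq_norm_sq_to_K _
  have hrem : ∀ z : H, (⟪m z, z⟫).re = ‖bst z‖^2 := by
    intro z
    rw [hinner_m z]
    norm_cast
  -- kernel lemma : fixed points of a are in ran P ⊓ ran Q
  have hker : ∀ y : H, a y = y → E₁ y = y := by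
    intro y hy
    have hyP : y ∈ LinearMap.range (P : H →ₗ[ℂ] H) := by
      refine ⟨(R*P) y, ?_⟩
      show P ((R*P) y) = y
      rw [← ContinuousLinearMap.mul_apply, ← mul_assoc, ← hadef]
      exact hy
    have hPy : P y = y := mem_range_fix hP hyP
    have hmy : m y = 0 := by
      rw [hmdef, sub_apply, pow_two, ContinuousLinearMap.mul_apply, hy, hy, sub_self]
    have hbsty : bst y = 0 := by
      have h2 : (‖bst y‖:ℂ)^2 = 0 := by rw [← hinner_m y, hmy, inner_zero_left]
      have h3 : ‖bst y‖ = 0 := by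
        have := pow_eq_zero_iff (n := 2) (by norm_num) |>.mp (by exact_mod_cast h2 : (‖bst y‖:ℂ)^2 = 0)
        exact_mod_cast this
      exact norm_eq_zero.mp h3
    have hRy : R y = y := by
      have h3 : (1-P) (R y) = 0 := by
        have h4 : bst y = (1-P) (R y) := by
          rw [hbstdef, ContinuousLinearMap.mul_apply, ContinuousLinearMap.mul_apply, hPy]
        rw [← h4, hbsty]
      rw [sub_apply, ContinuousLinearMap.one_apply] at h3
      have h5 : R y = P (R y) := sub_eq_zero.mp h3
      have h6 : P (R y) = y := by
        conv_lhs => rw [← hPy]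
        have h7 : P (R (P y)) = (P * R * P) y := by simp [ContinuousLinearMap.mul_apply]
        rw [h7, ← hadef]
        exact hy
      rw [h5, h6]
    have hQy : Q y = y := by
      have h7 : Q y = U (R y) := by rw [← ContinuousLinearMap.mul_apply, hUR]
      rw [h7, hRy]
      exact hUapp y hPy
    rw [hE₁def]
    exact projOn_apply_of_mem _ _ (Submodule.mem_inf.mpr ⟨hyP, ⟨y, hQy⟩⟩)
  -- norm of A via A A*
  have hAD : ‖A * star A‖ = ‖A‖^2 := by
    rw [CStarRing.norm_self_mul_star, pow_two]
  -- main quantitative step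
  have Hl : ∀ l : ℝ, 0 < l → l < ‖A‖^2 → l ≤ ‖B‖^2 := by
    intro l hl0 hlA
    by_cases hex : ∃ z : H, 0 < (⟪m z, z⟫).re ∧
        l * (⟪m z, z⟫).re ≤ (⟪((a^2 + a^2 - a) * m) z, z⟫).re
    · -- positive branch
      obtain ⟨z, hz1, hz2⟩ := hex
      have hw2 : (⟪m z, z⟫).re = ‖bst z‖^2 := hrem z
      have hwpos : 0 < ‖bst z‖^2 := hw2 ▸ hz1
      have hBw : (⟪((a^2 + a^2 - a) * m) z, z⟫).re = ‖star B (bst z)‖^2 := by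
        have h1 : (a^2 + a^2 - a) * m = b * (B * star B) * bst := by
          rw [hF1, hmdef]
        rw [h1, ContinuousLinearMap.mul_apply, ContinuousLinearMap.mul_apply, ← hbs]
        rw [show ⟪b ((B * star B) ((star b) z)), z⟫
              = ⟪(B * star B) ((star b) z), (star b) z⟫ from (adjoint_inner_right b _ z).symm]
        rw [ContinuousLinearMap.mul_apply]
        rw [show ⟪B ((star B) ((star b) z)), (star b) z⟫
              = ⟪(star B) ((star b) z), (star B) ((star b) z)⟫ from
            (adjoint_inner_right B _ _).symm]
        rw [inner_self_eq_norm_sq_to_K]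
        norm_cast
      have hup : ‖star B (bst z)‖^2 ≤ ‖B‖^2 * ‖bst z‖^2 := by
        have h5 : ‖star B (bst z)‖ ≤ ‖star B‖ * ‖bst z‖ := le_opNorm _ _
        have h6 : ‖star B‖ = ‖B‖ := norm_star B
        calc ‖star B (bst z)‖^2 ≤ (‖star B‖ * ‖bst z‖)^2 :=
              pow_le_pow_left₀ (norm_nonneg _) h5 2
          _ = ‖B‖^2 * ‖bst z‖^2 := by rw [h6]; ring
      nlinarith [hz2, hBw, hw2]
    · -- contradiction branch
      exfalso
      push_neg at hex
      set G : H →L[ℂ] H := (a^2 + a^2 - a - algebraMap ℝ (H →L[ℂ] H) l) * m with hGdef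
      have hGform : ∀ x : H, (⟪G x, x⟫).re ≤ 0 := by
        intro x
        have hsplit : G x = ((a^2 + a^2 - a) * m) x - l • (m x) := by
          have halg : (algebraMap ℝ (H →L[ℂ] H) l * m) x = l • (m x) := by
            rw [Algebra.algebraMap_eq_smul_one, smul_mul_assoc, one_mul, smul_apply]
          rw [hGdef, sub_mul, sub_apply, halg]
        by_cases hx : 0 < (⟪m x, x⟫).re
        · have hlt := hex x hx
          rw [hsplit, inner_sub_left, Complex.sub_re]
          have h1 : ⟪l • (m x), x⟫ = l • ⟪m x, x⟫ := inner_smul_real_left _ _ _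
          rw [h1]
          have h2 : (l • ⟪m x, x⟫).re = l * (⟪m x, x⟫).re := by simp [Complex.real_smul]
          rw [h2]
          linarith
        · push_neg at hx
          have h1 := hrem x
          have h2 : ‖bst x‖ = 0 := by nlinarith [norm_nonneg (bst x)]
          have h0 : bst x = 0 := norm_eq_zero.mp h2
          have hmx : m x = 0 := by rw [hmb, ContinuousLinearMap.mul_apply, h0, map_zero]
          have hGx : G x = 0 := by rw [hGdef, ContinuousLinearMap.mul_apply, hmx, map_zero]
          rw [hGx, inner_zero_left]
          simp
      have hGcfc : G = cfc (fun t : ℝ => (2*t^2 - t - l) * (t^2 - t)) a := by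
        rw [cfc_mul (fun t : ℝ => 2*t^2 - t - l) (fun t : ℝ => t^2 - t) a
          (by fun_prop) (by fun_prop)]
        have h1 : cfc (fun t : ℝ => 2*t^2 - t - l) a
            = a^2 + a^2 - a - algebraMap ℝ (H →L[ℂ] H) l := by
          rw [cfc_sub (fun t : ℝ => 2*t^2 - t) (fun _ : ℝ => l) a (by fun_prop) (by fun_prop),
            hfa, cfc_const l a]
        rw [h1, hmcfc, hGdef]
      have hGsa : IsSelfAdjoint G := by rw [hGcfc]; exact cfc_predicate _ a
      have hGneg : G ≤ 0 := by
        rw [← neg_nonneg, ContinuousLinearMap.nonneg_iff_isPositive]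
        refine ⟨hGsa.neg.isSymmetric, fun x => ?_⟩
        show (0:ℝ) ≤ (⟪(-G) x, x⟫).re
        rw [neg_apply, inner_neg_left]
        have := hGform x
        simp only [Complex.neg_re]
        linarith
      have hspecG : ∀ t ∈ spectrum ℝ a, (2*t^2 - t - l) * (t^2 - t) ≤ 0 := by
        intro t ht
        have hneg' : (0:H →L[ℂ] H) ≤ cfc (fun t : ℝ => -((2*t^2 - t - l) * (t^2 - t))) a := by
          rw [cfc_neg (fun t : ℝ => (2*t^2 - t - l) * (t^2 - t)) a, ← hGcfc]
          exact neg_nonneg.mpr hGneg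
        have h1 := (cfc_nonneg_iff (fun t : ℝ => -((2*t^2 - t - l) * (t^2 - t))) a
          (by fun_prop) hasa).mp hneg' t ht
        linarith
      have hspecm : ∀ t ∈ spectrum ℝ a, 0 ≤ t^2 - t := by
        intro t ht
        refine (cfc_nonneg_iff (fun t : ℝ => t^2 - t) a (by fun_prop) hasa).mp ?_ t ht
        rw [hmcfc]
        exact hm0
      obtain ⟨χ, hχc, hχ1, hχ2, hχ3⟩ := exists_chi l hl0 (spectrum ℝ a)
        (fun t ht => ⟨hspecm t ht, by
          have h := hspecG t ht
          have heq : (t^2 - t) * ((2*t^2 - t) - l) = (2*t^2 - t - l) * (t^2 - t) := by ring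
          linarith [heq ▸ h]⟩)
      set e : H →L[ℂ] H := cfc χ a with hedef
      have hesa : IsSelfAdjoint e := by rw [hedef]; exact cfc_predicate _ a
      have hes : star e = e := hesa
      have hee : e * e = e := by
        rw [hedef, ← cfc_mul χ χ a hχc.continuousOn hχc.continuousOn]
        exact cfc_congr fun t ht => hχ1 t ht
      have hae : a * e = e := by
        have h1 : cfc (fun t : ℝ => t * χ t) a = cfc (fun t : ℝ => t) a * cfc χ a :=
          cfc_mul _ _ a (by fun_prop) hχc.continuousOn
        rw [cfc_id' ℝ a] at h1
        have h2 : cfc (fun t : ℝ => t * χ t) a = cfc χ a := by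
          apply cfc_congr
          intro t ht
          have h3 := hχ2 t ht
          have h4 : t * χ t - χ t = 0 := by linear_combination h3
          show t * χ t = χ t
          linarith
        rw [hedef, ← h1]
        exact h2
      have hea : e * a = e := by
        have h1 := congrArg star hae
        rw [star_mul, hes, hasa.star_eq] at h1
        exact h1
      have heE₁ : E₁ * e = e := by
        ext x
        rw [ContinuousLinearMap.mul_apply]
        exact hker (e x) (by rw [← ContinuousLinearMap.mul_apply, hae])
      have heE₁' : e * E₁ = e := by
        have h1 := congrArg star heE₁
        rw [star_mul, hes, hE₁s] at h1
        exact h1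
      have hfaE : (a^2 + a^2 - a) * e = e := by
        have h2 : a^2 * e = e := by rw [pow_two, mul_assoc, hae, hae]
        rw [sub_mul, add_mul, h2, hae]
        abel
      have hEfa : e * (a^2 + a^2 - a) = e := by
        have h2 : e * a^2 = e := by rw [pow_two, ← mul_assoc, hea, hea]
        rw [mul_sub, mul_add, h2, hea]
        abel
      have hfaE₁ : (a^2 + a^2 - a) * E₁ = E₁ := by
        have h2 : a^2 * E₁ = E₁ := by rw [pow_two, mul_assoc, haE₁, haE₁]
        rw [sub_mul, add_mul, h2, haE₁]
        abel
      have hE₁fa : E₁ * (a^2 + a^2 - a) = E₁ := by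
        have h2 : E₁ * a^2 = E₁ := by rw [pow_two, ← mul_assoc, hE₁a, hE₁a]
        rw [mul_sub, mul_add, h2, hE₁a]
        abel
      have hDdecomp : A * star A
          = (1 - E₁) * ((1 - e) * ((a^2 + a^2 - a) * (1 - e))) * (1 - E₁) := by
        have s1 : (a^2 + a^2 - a) * (1 - e) = (a^2 + a^2 - a) - e := by
          rw [mul_sub, mul_one, hfaE]
        have s2 : (1 - e) * ((a^2 + a^2 - a) - e) = (a^2 + a^2 - a) - e := by
          rw [sub_mul, one_mul, mul_sub, hEfa, hee]
          abel
        have s3 : ((a^2 + a^2 - a) - e) * (1 - E₁) = (a^2 + a^2 - a) - E₁ := by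
          rw [sub_mul, mul_sub, mul_sub, mul_one, mul_one, hfaE₁, heE₁']
          abel
        have s4 : (1 - E₁) * ((a^2 + a^2 - a) - E₁) = (a^2 + a^2 - a) - E₁ := by
          rw [sub_mul, one_mul, mul_sub, hE₁fa, wE₁E₁]
          abel
        rw [hD, s1, s2, mul_assoc, s3, s4]
      have hc1m : Continuous (fun t : ℝ => 1 - χ t) := continuous_const.sub hχc
      have hfc : Continuous (fun t : ℝ => 2*t^2 - t) := by fun_prop
      have hchi01 : ∀ t ∈ spectrum ℝ a, χ t = 0 ∨ χ t = 1 := by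
        intro t ht
        have h1 := hχ1 t ht
        have h2 : χ t * (χ t - 1) = 0 := by linear_combination h1
        rcases mul_eq_zero.mp h2 with h | h
        · exact Or.inl h
        · exact Or.inr (by linarith)
      have hF₂cfc : (1 - e) * ((a^2 + a^2 - a) * (1 - e))
          = cfc (fun t : ℝ => (1 - χ t) * ((2*t^2 - t) * (1 - χ t))) a := by
        have hc1 : cfc (fun t : ℝ => 1 - χ t) a = 1 - e := by
          rw [cfc_sub (fun _ : ℝ => 1) χ a (by fun_prop) hχc.continuousOn,
            cfc_const_one ℝ a, hedef]
        rw [cfc_mul (fun t : ℝ => 1 - χ t) (fun t : ℝ => (2*t^2 - t) * (1 - χ t)) a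
            hc1m.continuousOn ((hfc.mul hc1m).continuousOn),
          cfc_mul (fun t : ℝ => 2*t^2 - t) (fun t : ℝ => 1 - χ t) a
            hfc.continuousOn hc1m.continuousOn,
          hc1, hfa]
      have hF₂0 : 0 ≤ (1 - e) * ((a^2 + a^2 - a) * (1 - e)) := by
        rw [hF₂cfc]
        apply cfc_nonneg
        intro t ht
        have h1 := (hχ3 t ht).1
        rcases hchi01 t ht with h | h
        · rw [h] at h1 ⊢
          norm_num at h1 ⊢
          linarith
        · rw [h]
          norm_num
      have hF₂le : (1 - e) * ((a^2 + a^2 - a) * (1 - e)) ≤ algebraMap ℝ (H →L[ℂ] H) l := by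
        have h1 : 0 ≤ cfc (fun t : ℝ => l - (1 - χ t) * ((2*t^2 - t) * (1 - χ t))) a := by
          apply cfc_nonneg
          intro t ht
          have h2 := (hχ3 t ht).2
          rcases hchi01 t ht with h | h
          · rw [h] at h2 ⊢
            norm_num at h2 ⊢
            linarith
          · rw [h]
            norm_num
            linarith [hl0.le]
        rw [cfc_sub (fun _ : ℝ => l) (fun t : ℝ => (1 - χ t) * ((2*t^2 - t) * (1 - χ t))) a
            (by fun_prop) ((hc1m.mul (hfc.mul hc1m)).continuousOn),
          cfc_const l a, ← hF₂cfc] at h1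
        exact sub_nonneg.mp h1
      have hconj : A * star A ≤ (1 - E₁) * algebraMap ℝ (H →L[ℂ] H) l * (1 - E₁) := by
        rw [hDdecomp]
        have h1 := star_left_conjugate_le_conjugate hF₂le (1 - E₁)
        rw [star_sub, star_one, hE₁s] at h1
        exact h1
      have hfinal : A * star A ≤ algebraMap ℝ (H →L[ℂ] H) l := by
        have h1 : (1 - E₁) * algebraMap ℝ (H →L[ℂ] H) l * (1 - E₁) = l • (1 - E₁) := by
          rw [Algebra.algebraMap_eq_smul_one, mul_smul_comm, mul_one, smul_mul_assoc]
          congr 1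
          rw [sub_mul, one_mul, mul_sub, mul_one, wE₁E₁]
          abel
        have h2 : l • (1 - E₁) ≤ algebraMap ℝ (H →L[ℂ] H) l := by
          rw [ContinuousLinearMap.le_def]
          have h3 : algebraMap ℝ (H →L[ℂ] H) l - l • (1 - E₁) = l • E₁ := by
            rw [Algebra.algebraMap_eq_smul_one, smul_sub, sub_sub_cancel]
          rw [h3]
          apply (ContinuousLinearMap.nonneg_iff_isPositive _).mp
          have h4 : star ((Real.sqrt l) • E₁) * ((Real.sqrt l) • E₁) = l • E₁ := by
            rw [star_smul, star_trivial, hE₁s, smul_mul_smul_comm,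
              wE₁E₁, Real.mul_self_sqrt hl0.le]
          rw [← h4]
          exact star_mul_self_nonneg _
        calc A * star A ≤ (1 - E₁) * algebraMap ℝ (H →L[ℂ] H) l * (1 - E₁) := hconj
          _ = l • (1 - E₁) := h1
          _ ≤ algebraMap ℝ (H →L[ℂ] H) l := h2
      have hnorm : ‖A * star A‖ ≤ l :=
        (CStarAlgebra.norm_le_iff_le_algebraMap _ hl0.le (mul_star_self_nonneg A)).mpr hfinal
      rw [hAD] at hnorm
      linarith
  -- conclude
  have hsq : ‖A‖^2 ≤ ‖B‖^2 := by
    by_contra hcon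
    push_neg at hcon
    have hA2pos : 0 < ‖A‖^2 := lt_of_le_of_lt (sq_nonneg _) hcon
    set l := (max (‖B‖^2) 0 + ‖A‖^2)/2 with hldef
    have hmaxlt : max (‖B‖^2) 0 < ‖A‖^2 := max_lt hcon hA2pos
    have hl0 : 0 < l := by
      have := le_max_right (‖B‖^2) 0
      rw [hldef]; linarith
    have hlA : l < ‖A‖^2 := by rw [hldef]; linarith
    have h8 := Hl l hl0 hlA
    have h9 : ‖B‖^2 ≤ max (‖B‖^2) 0 := le_max_left _ _
    rw [hldef] at h8
    linarith
  nlinarith [norm_nonneg A, norm_nonneg B, hsq]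


/-- For a quasi-projection pair `(P, Q)` on a complex Hilbert space, with
`H₁ = ran P ⊓ ran Q` and `H₄ = ker P ⊓ ker Q`:
`‖PQ - P_{H₁}‖ = ‖(I-P)(I-Q) - P_{H₄}‖`. -/
theorem quasiProjectionPair_friedrichs_norm_eq (P Q : H →L[ℂ] H)
    (hPsa : ContinuousLinearMap.adjoint P = P) (hP : P * P = P) (hQ : Q * Q = Q)
    (hPQ : ContinuousLinearMap.adjoint Q = (2 * P - 1) * Q * (2 * P - 1)) :
    ‖P * Q - projOn (LinearMap.range (P : H →ₗ[ℂ] H) ⊓ LinearMap.range (Q : H →ₗ[ℂ] H))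
        (isClosed_inf (isClosed_range_of_idem P hP) (isClosed_range_of_idem Q hQ))‖
      = ‖(1 - P) * (1 - Q) - projOn (LinearMap.ker (P : H →ₗ[ℂ] H) ⊓ LinearMap.ker (Q : H →ₗ[ℂ] H))
          (isClosed_inf (ContinuousLinearMap.isClosed_ker P)
            (ContinuousLinearMap.isClosed_ker Q))‖ := by
  have hadj : ∀ T : H →L[ℂ] H, ContinuousLinearMap.adjoint T = star T := fun _ => rfl
  apply le_antisymm
  · exact key_ineq P Q hPsa hP hQ hPQ _ _
  · -- apply the key inequality to the complementary pair (1 - P, 1 - Q)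
    have hP' : (1 - P) * (1 - P) = 1 - P := by
      have h : (1 - P) * (1 - P) = 1 - 2*P + P*P := by noncomm_ring
      rw [h, hP]; noncomm_ring
    have hQ' : (1 - Q) * (1 - Q) = 1 - Q := by
      have h : (1 - Q) * (1 - Q) = 1 - 2*Q + Q*Q := by noncomm_ring
      rw [h, hQ]; noncomm_ring
    have h1P : ContinuousLinearMap.adjoint (1 - P) = 1 - P := by
      rw [hadj, star_sub, star_one, ← hadj, hPsa]
    have hU2 : (2*P - 1) * (2*P - 1) = 1 := by
      have h : (2*P - 1) * (2*P - 1) = 4*(P*P) - 4*P + 1 := by noncomm_ring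
      rw [h, hP]; noncomm_ring
    have hPQ' : ContinuousLinearMap.adjoint (1 - Q)
        = (2 * (1 - P) - 1) * (1 - Q) * (2 * (1 - P) - 1) := by
      rw [hadj, star_sub, star_one, ← hadj, hPQ]
      have h2 : 2 * (1 - P) - 1 = -(2*P - 1) := by noncomm_ring
      rw [h2]
      have hexp : -(2*P - 1) * (1 - Q) * -(2*P - 1)
          = (2*P - 1) * (2*P - 1) - (2*P - 1) * Q * (2*P - 1) := by noncomm_ring
      rw [hexp, hU2]
    have key2 := key_ineq (1 - P) (1 - Q) h1P hP' hQ' hPQ'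
      (isClosed_inf (isClosed_range_of_idem (1 - P) hP') (isClosed_range_of_idem (1 - Q) hQ'))
      (isClosed_inf (ContinuousLinearMap.isClosed_ker (1 - P))
        (ContinuousLinearMap.isClosed_ker (1 - Q)))
    have e1 : LinearMap.range ((1 - P : H →L[ℂ] H) : H →ₗ[ℂ] H) = LinearMap.ker (P : H →ₗ[ℂ] H) := by
      rw [range_eq_ker_of_idem (1 - P) hP', sub_sub_cancel]
    have e2 : LinearMap.range ((1 - Q : H →L[ℂ] H) : H →ₗ[ℂ] H) = LinearMap.ker (Q : H →ₗ[ℂ] H) := by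
      rw [range_eq_ker_of_idem (1 - Q) hQ', sub_sub_cancel]
    have e3 : LinearMap.ker ((1 - P : H →L[ℂ] H) : H →ₗ[ℂ] H) = LinearMap.range (P : H →ₗ[ℂ] H) := (range_eq_ker_of_idem P hP).symm
    have e4 : LinearMap.ker ((1 - Q : H →L[ℂ] H) : H →ₗ[ℂ] H) = LinearMap.range (Q : H →ₗ[ℂ] H) := (range_eq_ker_of_idem Q hQ).symm
    have p1 : projOn (LinearMap.range ((1 - P : H →L[ℂ] H) : H →ₗ[ℂ] H) ⊓ LinearMap.range ((1 - Q : H →L[ℂ] H) : H →ₗ[ℂ] H))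
        (isClosed_inf (isClosed_range_of_idem (1 - P) hP') (isClosed_range_of_idem (1 - Q) hQ'))
        = projOn (LinearMap.ker (P : H →ₗ[ℂ] H) ⊓ LinearMap.ker (Q : H →ₗ[ℂ] H))
          (isClosed_inf (ContinuousLinearMap.isClosed_ker P)
            (ContinuousLinearMap.isClosed_ker Q)) :=
      projOn_congr _ _ (by rw [e1, e2])
    have p2 : projOn (LinearMap.ker ((1 - P : H →L[ℂ] H) : H →ₗ[ℂ] H) ⊓ LinearMap.ker ((1 - Q : H →L[ℂ] H) : H →ₗ[ℂ] H))
        (isClosed_inf (ContinuousLinearMap.isClosed_ker (1 - P))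
          (ContinuousLinearMap.isClosed_ker (1 - Q)))
        = projOn (LinearMap.range (P : H →ₗ[ℂ] H) ⊓ LinearMap.range (Q : H →ₗ[ℂ] H))
          (isClosed_inf (isClosed_range_of_idem P hP) (isClosed_range_of_idem Q hQ)) :=
      projOn_congr _ _ (by rw [e3, e4])
    rw [p1, p2, sub_sub_cancel, sub_sub_cancel] at key2
    exact key2
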